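/- Let c, d ∈ ℝ with c < 0 and d > 0. Then there exists a constant A > 0 (depending only on c and d) such that for every real B with 0 < B < 1, the sum ∑_{j=1}^{∞} 2^{cj}·min(1, B·2^{dj}) converges and satisfies ∑_{j=1}^{∞} 2^{cj}·min(1, B·2^{dj}) ≤ A·(B + |log B|·B^{−c/d}). (Lemma 5.1(2).) -/

import Mathlib

/-!
Write `t = -c/d`. Every term is at most `2^{cj}`, so the series is dominated by a geometric one;
this alone settles `B ≥ 1/2`. If `c + d < 0`, then `min(1, y) ≤ y` makes every term at most
`B·2^{(c+d)j}`, again geometric. If `c + d ≥ 0`, then `t ≤ 1` and `min(1, y) ≤ y^t` bounds every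
term by `B^t`; splitting the sum at `M ≈ |log B| / (d log 2)`, where `2^{cM} ≤ B^t`, the first
`M` terms contribute at most `M·B^t` and the geometric tail at most `2^{cM}/(1 - 2^c) ≲ B^t`.
-/

open Real Finset

lemma summable_and_tsum_le_of_le_geometric {f : ℕ → ℝ} {b r : ℝ} (hf : ∀ j, 0 ≤ f j)
    (hr0 : 0 ≤ r) (hr1 : r < 1) (hfr : ∀ j, f j ≤ b * r ^ j) :
    Summable f ∧ ∑' j, f j ≤ b / (1 - r) := by
  have hgeo : Summable fun j ↦ b * r ^ j := (summable_geometric_of_lt_one hr0 hr1).mul_left b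
  have hsum : Summable f := .of_nonneg_of_le hf hfr hgeo
  refine ⟨hsum, ?_⟩
  calc ∑' j, f j ≤ ∑' j, b * r ^ j := hsum.tsum_le_tsum hfr hgeo
    _ = b / (1 - r) := by rw [tsum_mul_left, tsum_geometric_of_lt_one hr0 hr1, div_eq_mul_inv]

lemma tsum_le_of_le_const_of_le_geometric {f : ℕ → ℝ} {b r : ℝ} (hf : ∀ j, 0 ≤ f j)
    (hr0 : 0 ≤ r) (hr1 : r < 1) (hfb : ∀ j, f j ≤ b) (hfr : ∀ j, f j ≤ r ^ j) (M : ℕ) :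
    ∑' j, f j ≤ M * b + r ^ M / (1 - r) := by
  have hsum := (summable_and_tsum_le_of_le_geometric hf hr0 hr1 (b := 1) (by simpa using hfr)).1
  have htail := (summable_and_tsum_le_of_le_geometric (fun j ↦ hf (j + M)) hr0 hr1
    fun j ↦ (hfr (j + M)).trans_eq (by rw [pow_add, mul_comm])).2
  have hhead : ∑ j ∈ range M, f j ≤ M * b := by
    simpa using sum_le_card_nsmul (range M) f b fun j _ ↦ hfb j
  rw [← hsum.sum_add_tsum_nat_add M]
  exact add_le_add hhead htail

lemma pow_natCeil_log_div_log_le {r x : ℝ} (hr0 : 0 < r) (hr1 : r < 1) (hx : 0 < x) :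
    r ^ ⌈log x / log r⌉₊ ≤ x := by
  rw [← log_le_log_iff (pow_pos hr0 _) hx, log_pow]
  exact (div_le_iff_of_neg (log_neg hr0 hr1)).1 (Nat.le_ceil _)

lemma min_one_le_rpow {y t : ℝ} (hy : 0 ≤ y) (ht0 : 0 ≤ t) (ht1 : t ≤ 1) : min 1 y ≤ y ^ t := by
  rcases le_total y 1 with h | h
  · exact (min_le_right _ _).trans (self_le_rpow_of_le_one hy h ht1)
  · exact (min_le_left _ _).trans (one_le_rpow h ht0)

lemma rpow_mul_natCast_add_one {x : ℝ} (hx : 0 ≤ x) (e : ℝ) (j : ℕ) :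
    x ^ (e * ((j : ℝ) + 1)) = (x ^ e) ^ (j + 1) := by
  rw [← rpow_mul_natCast hx]; push_cast; rfl

noncomputable def dyadicMinTerm (c d B : ℝ) (j : ℕ) : ℝ :=
  (2 : ℝ) ^ (c * ((j : ℝ) + 1)) * min 1 (B * (2 : ℝ) ^ (d * ((j : ℝ) + 1)))

section dyadicMinTerm

variable {c d B : ℝ}

lemma dyadicMinTerm_nonneg (hB : 0 ≤ B) (j : ℕ) : 0 ≤ dyadicMinTerm c d B j := by
  unfold dyadicMinTerm; positivity

lemma dyadicMinTerm_le_pow (hc : c ≤ 0) (j : ℕ) : dyadicMinTerm c d B j ≤ ((2 : ℝ) ^ c) ^ j :=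
  calc dyadicMinTerm c d B j ≤ (2 : ℝ) ^ (c * ((j : ℝ) + 1)) * 1 := by
        unfold dyadicMinTerm; gcongr; exact min_le_left _ _
    _ = ((2 : ℝ) ^ c) ^ (j + 1) := by rw [mul_one, rpow_mul_natCast_add_one zero_le_two]
    _ ≤ ((2 : ℝ) ^ c) ^ j :=
        pow_le_pow_of_le_one (by positivity) (rpow_le_one_of_one_le_of_nonpos one_le_two hc)
          j.le_succ

lemma dyadicMinTerm_le_mul_pow (hB : 0 ≤ B) (hcd : c + d ≤ 0) (j : ℕ) :
    dyadicMinTerm c d B j ≤ B * ((2 : ℝ) ^ (c + d)) ^ j :=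
  calc dyadicMinTerm c d B j
      ≤ (2 : ℝ) ^ (c * ((j : ℝ) + 1)) * (B * (2 : ℝ) ^ (d * ((j : ℝ) + 1))) := by
        unfold dyadicMinTerm; gcongr; exact min_le_right _ _
    _ = B * ((2 : ℝ) ^ (c + d)) ^ (j + 1) := by
        rw [← rpow_mul_natCast_add_one zero_le_two, add_mul, rpow_add two_pos]; ring
    _ ≤ B * ((2 : ℝ) ^ (c + d)) ^ j :=
        mul_le_mul_of_nonneg_left (pow_le_pow_of_le_one (by positivity)
          (rpow_le_one_of_one_le_of_nonpos one_le_two hcd) j.le_succ) hB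

lemma dyadicMinTerm_le_rpow (hB : 0 ≤ B) (hd : 0 < d) (hc : c ≤ 0) (hcd : 0 ≤ c + d) (j : ℕ) :
    dyadicMinTerm c d B j ≤ B ^ (-c / d) := by
  have ht0 : 0 ≤ -c / d := div_nonneg (by linarith) hd.le
  have ht1 : -c / d ≤ 1 := (div_le_one hd).2 (by linarith)
  calc dyadicMinTerm c d B j
      ≤ (2 : ℝ) ^ (c * ((j : ℝ) + 1)) * (B * (2 : ℝ) ^ (d * ((j : ℝ) + 1))) ^ (-c / d) := by
        unfold dyadicMinTerm; gcongr; exact min_one_le_rpow (by positivity) ht0 ht1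
    _ = B ^ (-c / d) := by
        rw [mul_rpow hB (by positivity), ← rpow_mul zero_le_two, mul_left_comm,
          ← rpow_add two_pos]
        field_simp
        simp

lemma tsum_dyadicMinTerm_le_log_mul_rpow (hc : c < 0) (hd : 0 < d) (hcd : 0 ≤ c + d)
    (hB0 : 0 < B) (hB : B ≤ 1 / 2) :
    ∑' j, dyadicMinTerm c d B j ≤
      (1 / d + 1 + (1 - (2 : ℝ) ^ c)⁻¹) / log 2 * (|log B| * B ^ (-c / d)) := by
  set r : ℝ := (2 : ℝ) ^ c
  set t : ℝ := -c / d
  have hr1 : r < 1 := rpow_lt_one_of_one_lt_of_neg one_lt_two hc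
  have hlog2 : 0 < log 2 := log_pos one_lt_two
  have hlogB : |log B| = -log B := abs_of_neg (log_neg hB0 (by linarith))
  have hlogB_ge : log 2 ≤ |log B| := by
    have := log_le_log hB0 hB
    rw [one_div, log_inv] at this
    linarith
  have hexp : log (B ^ t) / log r = |log B| / (d * log 2) := by
    rw [log_rpow hB0, log_rpow two_pos, hlogB, show t = -c / d from rfl]; field_simp [hc.ne]
  set M : ℕ := ⌈|log B| / (d * log 2)⌉₊
  have hrM : r ^ M ≤ B ^ t := by
    simpa only [M, hexp] using
      pow_natCeil_log_div_log_le (x := B ^ t) (by positivity) hr1 (by positivity)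
  have hM : (M : ℝ) ≤ |log B| / (d * log 2) + 1 := (Nat.ceil_lt_add_one (by positivity)).le
  calc ∑' j, dyadicMinTerm c d B j ≤ M * B ^ t + r ^ M / (1 - r) :=
        tsum_le_of_le_const_of_le_geometric (dyadicMinTerm_nonneg hB0.le) (by positivity) hr1
          (dyadicMinTerm_le_rpow hB0.le hd hc.le hcd) (dyadicMinTerm_le_pow hc.le) M
    _ ≤ (|log B| / (d * log 2) + 1) * B ^ t + B ^ t / (1 - r) := by
        gcongr
    _ = (|log B| / d + (1 + (1 - r)⁻¹) * log 2) / log 2 * B ^ t := by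
        field_simp; ring
    _ ≤ (|log B| / d + (1 + (1 - r)⁻¹) * |log B|) / log 2 * B ^ t := by
        have : 0 < 1 - r := by linarith
        gcongr
    _ = (1 / d + 1 + (1 - r)⁻¹) / log 2 * (|log B| * B ^ t) := by ring

lemma tsum_dyadicMinTerm_le_of_half_le (hc : c < 0) (hB0 : 0 < B) (hB : 1 / 2 ≤ B) :
    ∑' j, dyadicMinTerm c d B j ≤ 2 / (1 - (2 : ℝ) ^ c) * B := by
  have hr1 : (2 : ℝ) ^ c < 1 := rpow_lt_one_of_one_lt_of_neg one_lt_two hc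
  calc ∑' j, dyadicMinTerm c d B j ≤ 1 / (1 - (2 : ℝ) ^ c) :=
        (summable_and_tsum_le_of_le_geometric (dyadicMinTerm_nonneg hB0.le) (by positivity) hr1
          (by simpa using dyadicMinTerm_le_pow hc.le)).2
    _ = 2 / (1 - (2 : ℝ) ^ c) * (1 / 2) := by ring
    _ ≤ 2 / (1 - (2 : ℝ) ^ c) * B := by
        have : 0 < 1 - (2 : ℝ) ^ c := by linarith
        gcongr

lemma tsum_dyadicMinTerm_le_of_add_neg (hcd : c + d < 0) (hB0 : 0 < B) :
    ∑' j, dyadicMinTerm c d B j ≤ 1 / (1 - (2 : ℝ) ^ (c + d)) * B := by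
  have hs1 : (2 : ℝ) ^ (c + d) < 1 := rpow_lt_one_of_one_lt_of_neg one_lt_two hcd
  rw [one_div_mul_eq_div]
  exact (summable_and_tsum_le_of_le_geometric (dyadicMinTerm_nonneg hB0.le) (by positivity) hs1
    (dyadicMinTerm_le_mul_pow hB0.le hcd.le)).2

end dyadicMinTerm

/-- Lemma 5.1(2): if `c < 0` and `d > 0`, then there is `A > 0` such that for all
`0 < B < 1`, `∑_{j=1}^∞ 2^{cj} min(1, B·2^{dj}) ≤ A(B + |log B|·B^{−c/d})`. -/
theorem sum_min_bound_of_pos (c d : ℝ) (hc : c < 0) (hd : 0 < d) :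
    ∃ A : ℝ, 0 < A ∧ ∀ B : ℝ, 0 < B → B < 1 →
      Summable (fun j : ℕ =>
        (2 : ℝ) ^ (c * ((j : ℝ) + 1)) * min 1 (B * (2 : ℝ) ^ (d * ((j : ℝ) + 1)))) ∧
      (∑' j : ℕ, (2 : ℝ) ^ (c * ((j : ℝ) + 1)) * min 1 (B * (2 : ℝ) ^ (d * ((j : ℝ) + 1)))) ≤
        A * (B + |Real.log B| * B ^ (-c / d)) := by
  have hr1 : (2 : ℝ) ^ c < 1 := rpow_lt_one_of_one_lt_of_neg one_lt_two hc
  set A := max (max (2 / (1 - (2 : ℝ) ^ c)) ((1 / d + 1 + (1 - (2 : ℝ) ^ c)⁻¹) / log 2))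
    (1 / (1 - (2 : ℝ) ^ (c + d)))
  have hA : 0 < A := lt_max_of_lt_left (lt_max_of_lt_left (div_pos two_pos (by linarith)))
  refine ⟨A, hA, fun B hB0 _ ↦ ⟨?_, ?_⟩⟩
  · exact (summable_and_tsum_le_of_le_geometric (dyadicMinTerm_nonneg hB0.le) (by positivity) hr1
      (b := 1) (by simpa using dyadicMinTerm_le_pow (d := d) (B := B) hc.le)).1
  have hB : B ≤ B + |log B| * B ^ (-c / d) := le_add_of_nonneg_right (by positivity)
  have hlog : |log B| * B ^ (-c / d) ≤ B + |log B| * B ^ (-c / d) := le_add_of_nonneg_left hB0.le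
  rcases le_or_gt (1 / 2) B with hB2 | hB2
  · exact (tsum_dyadicMinTerm_le_of_half_le hc hB0 hB2).trans
      (mul_le_mul (le_max_of_le_left (le_max_left _ _)) hB hB0.le hA.le)
  rcases lt_or_ge (c + d) 0 with hcd | hcd
  · exact (tsum_dyadicMinTerm_le_of_add_neg hcd hB0).trans
      (mul_le_mul (le_max_right _ _) hB hB0.le hA.le)
  · exact (tsum_dyadicMinTerm_le_log_mul_rpow hc hd hcd hB0 hB2.le).trans
      (mul_le_mul (le_max_of_le_left (le_max_right _ _)) hlog (by positivity) hA.le)
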